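/- If γ : V → Set X → Set X is a V-graded closure operator, then α_γ : V → X → Set (Set X) defined by α_γ a x = {A : Set X | x ∉ γ a Aᶜ} is a V-tower for the up-set monad: each α_γ a x is an up-set on X, and (K0), (K1), (K2) hold. -/

import Mathlib

/-! Reading `A ∈ α_γ a x` as "`x` is not in the `a`-closure of `Aᶜ`", monotonicity of `γ`
gives the up-set property, (Γ1) gives (K1) and (Γ3) gives (K2). For (K0) the key point is
that (Γ4) makes `γ` antitone in the grade, and then turns `γ (sSup S)` into `⋂ a ∈ S, γ a`:
anything totally below `sSup S` lies below some `a ∈ S`. -/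

/-- `b` is totally below `a`: every set whose supremum dominates `a` contains an
element dominating `b`. -/
def totallyBelow {V : Type*} [CompleteLattice V] (b a : V) : Prop :=
  ∀ S : Set V, a ≤ sSup S → ∃ s ∈ S, b ≤ s

theorem totallyBelow.trans_le {V : Type*} [CompleteLattice V] {c b a : V}
    (hcb : totallyBelow c b) (hba : b ≤ a) : totallyBelow c a :=
  fun S hS => hcb S (hba.trans hS)

section GradedClosure

variable {V X : Type*} [CompleteLattice V] {γ : V → Set X → Set X}

theorem gradedClosure_anti
    (hG4 : ∀ (a : V) (A : Set X), γ a A = ⋂ b, ⋂ (_ : totallyBelow b a), γ b A)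
    {a b : V} (hba : b ≤ a) (A : Set X) : γ a A ⊆ γ b A := by
  rw [hG4 a A, hG4 b A]
  exact Set.iInter₂_mono' fun c hc => ⟨c, hc.trans_le hba, subset_rfl⟩

theorem gradedClosure_sSup_eq_biInter
    (hG4 : ∀ (a : V) (A : Set X), γ a A = ⋂ b, ⋂ (_ : totallyBelow b a), γ b A)
    (S : Set V) (A : Set X) : γ (sSup S) A = ⋂ a ∈ S, γ a A := by
  refine (Set.subset_iInter₂ fun a ha => gradedClosure_anti hG4 (le_sSup ha) A).antisymm ?_
  rw [hG4 (sSup S) A]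
  refine Set.subset_iInter₂ fun b hb => ?_
  obtain ⟨s, hs, hbs⟩ := hb S le_rfl
  exact (Set.biInter_subset_of_mem hs).trans (gradedClosure_anti hG4 hbs A)

end GradedClosure

theorem upset_tower_of_graded_closure_general
    {V : Type*} [CompletelyDistribLattice V] [Monoid V]
    {X : Type*} (γ : V → Set X → Set X)
    (hG1 : ∀ (a : V) (A : Set X), a ≤ 1 → A ⊆ γ a A)
    (hG2 : ∀ (a : V) (A B : Set X), A ⊆ B → γ a A ⊆ γ a B)
    (hG3 : ∀ (a b : V) (A : Set X), γ b (γ a A) ⊆ γ (a * b) A)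
    (hG4 : ∀ (a : V) (A : Set X), γ a A = ⋂ b, ⋂ (_ : totallyBelow b a), γ b A) :
    (∀ (a : V) (x : X) (A B : Set X),
        A ∈ {C : Set X | x ∉ γ a Cᶜ} → A ⊆ B → B ∈ {C : Set X | x ∉ γ a Cᶜ})
    ∧ (∀ (S : Set V) (x : X),
        {C : Set X | x ∉ γ (sSup S) Cᶜ} = ⋃ a ∈ S, {C : Set X | x ∉ γ a Cᶜ})
    ∧ (∀ (x : X) (A : Set X), A ∈ {C : Set X | x ∉ γ 1 Cᶜ} → x ∈ A)
    ∧ (∀ (a b : V) (x : X) (A : Set X),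
        A ∈ {C : Set X | x ∉ γ (a * b) Cᶜ} →
          {y | A ∈ {C : Set X | y ∉ γ a Cᶜ}} ∈ {C : Set X | x ∉ γ b Cᶜ}) := by
  refine ⟨?upset, ?K0, ?K1, ?K2⟩
  case upset =>
    exact fun a x A B hA hAB hB => hA (hG2 a Bᶜ Aᶜ (Set.compl_subset_compl.2 hAB) hB)
  case K0 =>
    intro S x
    ext C
    simp only [gradedClosure_sSup_eq_biInter hG4, Set.mem_ofPred_eq, Set.mem_iInter,
      Set.mem_iUnion, not_forall, exists_prop]
  case K1 =>
    exact fun x A hA => by_contra fun hx => hA (hG1 1 Aᶜ le_rfl hx)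
  case K2 =>
    intro a b x A hA hx
    exact hA (hG3 a b Aᶜ (hG2 b _ _ (fun y hy => not_not.1 hy) hx))

/-- If `γ` is a `V`-graded closure operator, then `α_γ a x = {A | x ∉ γ a Aᶜ}` is a
`V`-tower for the up-set monad: each `α_γ a x` is an up-set, and (K0)–(K2) hold. -/
theorem upset_tower_of_graded_closure
    {V : Type*} [CompletelyDistribLattice V] [Monoid V]
    (hl : ∀ (a : V) (S : Set V), a * sSup S = ⨆ s ∈ S, a * s)
    (hr : ∀ (a : V) (S : Set V), sSup S * a = ⨆ s ∈ S, s * a)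
    (hnt : (⊥ : V) ≠ 1)
    {X : Type*} (γ : V → Set X → Set X)
    (hG1 : ∀ (a : V) (A : Set X), a ≤ 1 → A ⊆ γ a A)
    (hG2 : ∀ (a : V) (A B : Set X), A ⊆ B → γ a A ⊆ γ a B)
    (hG3 : ∀ (a b : V) (A : Set X), γ b (γ a A) ⊆ γ (a * b) A)
    (hG4 : ∀ (a : V) (A : Set X), γ a A = ⋂ b, ⋂ (_ : totallyBelow b a), γ b A) :
    (∀ (a : V) (x : X) (A B : Set X),
        A ∈ {C : Set X | x ∉ γ a Cᶜ} → A ⊆ B → B ∈ {C : Set X | x ∉ γ a Cᶜ})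
    ∧ (∀ (S : Set V) (x : X),
        {C : Set X | x ∉ γ (sSup S) Cᶜ} = ⋃ a ∈ S, {C : Set X | x ∉ γ a Cᶜ})
    ∧ (∀ (x : X) (A : Set X), A ∈ {C : Set X | x ∉ γ 1 Cᶜ} → x ∈ A)
    ∧ (∀ (a b : V) (x : X) (A : Set X),
        A ∈ {C : Set X | x ∉ γ (a * b) Cᶜ} →
          {y | A ∈ {C : Set X | y ∉ γ a Cᶜ}} ∈ {C : Set X | x ∉ γ b Cᶜ}) :=
  upset_tower_of_graded_closure_general γ hG1 hG2 hG3 hG4
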